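/- Let G' = (V, E') be the random subgraph of G = (V, E) obtained by including each edge independently with probability p = 4/log n, and for each e ∈ E let s'_e denote the strong connectivity of e in the graph (V, E' ∪ {e}). Then, with high probability (at least 1 − n^{−d}), every edge e ∈ E satisfies s'_e ≤ s_e ≤ 2 s'_e log n + ρ log n, where ρ = 16(d+2) ln n. -/

import Mathlib

namespace GraphSparsification

open scoped BigOperators

variable {V : Type*}

/-- An edge `e` crosses the cut `(S, Sᶜ)`. -/
def Crosses (S : Set V) (e : Sym2 V) : Prop :=
  ∃ u v, e = s(u, v) ∧ u ∈ S ∧ v ∉ S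

/-- The value (number of edges) of the cut determined by `S` in the edge set `E`. -/
noncomputable def cutValue (E : Set (Sym2 V)) (S : Set V) : ℕ :=
  {e | e ∈ E ∧ Crosses S e}.ncard

/-- The graph with vertex set `U` and edge set `F` is `k`-connected:
every cut has value at least `k`. -/
def IsKConnected (U : Set V) (F : Set (Sym2 V)) (k : ℕ) : Prop :=
  ∀ S : Set V, S ⊆ U → S.Nonempty → S ≠ U → k ≤ cutValue F S

/-- Edges of `E` with both endpoints in `U` (the vertex-induced subgraph). -/
def induced (E : Set (Sym2 V)) (U : Set V) : Set (Sym2 V) :=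
  {e | e ∈ E ∧ ∀ x ∈ e, x ∈ U}

/-- `U` is a `k`-strong component of the graph with edge set `E`:
a maximal `k`-connected vertex-induced subgraph. -/
def IsStrongComponent (E : Set (Sym2 V)) (k : ℕ) (U : Set V) : Prop :=
  U.Nonempty ∧ IsKConnected U (induced E U) k ∧
    ∀ U' : Set V, U ⊆ U' → IsKConnected U' (induced E U') k → U' = U

/-- Strong connectivity of an edge: the largest `k` such that some `k`-strong component
contains `e`. -/
noncomputable def strongConn (E : Set (Sym2 V)) (e : Sym2 V) : ℕ :=
  sSup {k | ∃ U : Set V, IsStrongComponent E k U ∧ e ∈ induced E U}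

/-- Connectivity via edges of `F`. -/
def connRel (F : Set (Sym2 V)) : V → V → Prop :=
  Relation.ReflTransGen (fun a b => a ≠ b ∧ s(a, b) ∈ F)

/-- Number of connected components of the graph on `V` with edge set `F`. -/
noncomputable def numComponents (F : Set (Sym2 V)) : ℕ :=
  Nat.card (Quot (fun a b : V => a ≠ b ∧ s(a, b) ∈ F))

/-- Weight of the cut determined by `S` in the weighted graph `(E', w)`. -/
noncomputable def cutWeight (E' : Set (Sym2 V)) (w : Sym2 V → ℝ) (S : Set V) : ℝ :=
  ∑ᶠ e ∈ {e | e ∈ E' ∧ Crosses S e}, w e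

/-- The weighted graph `(E', w)` is an `ε`-sparsification of `E`: every weighted cut is
within a `(1 ± ε)` factor of the corresponding cut of `E`. -/
def IsSparsification (E E' : Set (Sym2 V)) (w : Sym2 V → ℝ) (ε : ℝ) : Prop :=
  ∀ S : Set V, S.Nonempty → S ≠ Set.univ →
    (1 - ε) * (cutValue E S : ℝ) ≤ cutWeight E' w S ∧
      cutWeight E' w S ≤ (1 + ε) * (cutValue E S : ℝ)

/-- Probability weight of the outcome `σ` when each coin `a` comes up `true`
independently with probability `p a`. -/
noncomputable def bernWeight {α : Type*} [Fintype α] (p : α → ℝ) (σ : α → Bool) : ℝ :=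
  ∏ a, if σ a then p a else 1 - p a

/-- Probability of the event `A` under independent coins with head-probabilities `p`. -/
noncomputable def Pr {α : Type*} [Fintype α] [DecidableEq α] (p : α → ℝ)
    (A : Set (α → Bool)) : ℝ :=
  ∑ σ : α → Bool, A.indicator (bernWeight p) σ

/-- Expectation of `f` under independent coins with head-probabilities `p`. -/
noncomputable def Exp {α : Type*} [Fintype α] [DecidableEq α] (p : α → ℝ)
    (f : (α → Bool) → ℝ) : ℝ :=
  ∑ σ : α → Bool, bernWeight p σ * f σ

/-- Same-part relation of the partition `S_{l,k}` of refinement sampling after `k` rounds of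
refinement at level `l` (the `Fin L` index `l` represents level `l+1`, and the `Fin K`
index `k` represents round `k+1`): `S_{l,0} = {V}`, and `S_{l,k+1}` splits each part of
`S_{l,k}` into the connected components spanned by edges whose `(l,k+1)`-coin is `true`
and whose endpoints lie in one part of `S_{l,k}`. -/
def sameS (E : Set (Sym2 V)) {L K : ℕ} (σ : Fin L × Fin K × Sym2 V → Bool) (l : Fin L) :
    ℕ → V → V → Prop
  | 0 => fun _ _ => True
  | k + 1 => fun u v =>
      Relation.ReflTransGen (fun a b => a ≠ b ∧ s(a, b) ∈ E ∧ sameS E σ l k a b ∧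
        ∃ hk : k < K, σ (l, ⟨k, hk⟩, s(a, b)) = true) u v

/-- `L(e)`: the minimum level `l ∈ {1, …, L}` such that the endpoints of `e` lie in
different parts of `S_{l,K}`. -/
noncomputable def levelOf (E : Set (Sym2 V)) {L K : ℕ} (σ : Fin L × Fin K × Sym2 V → Bool)
    (e : Sym2 V) : ℕ :=
  sInf {m | ∃ l : Fin L, m = (l : ℕ) + 1 ∧ ∀ u v : V, e = s(u, v) → ¬ sameS E σ l K u v}

/-- Head-probabilities of the refinement-sampling coins: the coin of level `l` (represented
by the `Fin L` index `l - 1`) comes up `true` with probability `2^{-l}`. -/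
noncomputable def pCoins {L K : ℕ} : Fin L × Fin K × Sym2 V → ℝ :=
  fun x => (1 / 2 : ℝ) ^ ((x.1 : ℕ) + 1)

/-- One step of Algorithm 3: process the arriving edge `e` with coins `coin` (indexed by
`J ∈ {1, …, LK}`), updating the partitions `D`, where `D 0` is the trivial partition `{V}`:
for `J = 1, 2, …` in order, the parts of `D J` containing the endpoints of `e` are merged
if the `J`-th coin of `e` is `true` and the endpoints of `e` lie in one part of the
(already updated) partition number `J - 1`. -/
def processEdge (e : Sym2 V) (coin : ℕ → Bool) (D : ℕ → V → V → Prop) : ℕ → V → V → Prop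
  | 0 => fun _ _ => True
  | J + 1 => fun u v =>
      Relation.EqvGen (fun a b => D (J + 1) a b ∨
        (coin (J + 1) = true ∧ s(a, b) = e ∧ processEdge e coin D J a b)) u v

/-- Initial state of the partitions of Algorithm 3: `D 0 = {V}` is the trivial partition and
all other partitions consist of singletons. -/
def initD : ℕ → V → V → Prop
  | 0 => fun _ _ => True
  | _ + 1 => Eq

/-- State of the partitions of Algorithm 3 after the first `t` edges of the stream `es`
have been processed. -/
def DStream (coin : Sym2 V → ℕ → Bool) (es : ℕ → Sym2 V) : ℕ → ℕ → V → V → Prop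
  | 0 => initD
  | t + 1 => processEdge (es t) (coin (es t)) (DStream coin es t)

/-- The endpoints of the edge `es t` lie in the same part of partition number `J` at the
moment `es t` arrives (i.e. while `es t` is being processed, partitions `0, …, J` having
already been updated). -/
def connectedAtArrival (coin : Sym2 V → ℕ → Bool) (es : ℕ → Sym2 V) (t J : ℕ) : Prop :=
  ∀ u v : V, es t = s(u, v) → processEdge (es t) (coin (es t)) (DStream coin es t) J u v

/-- The coins of Algorithm 3, reindexed by `J = K(l-1) + k`. -/
def coinOf {L K : ℕ} (σ : Fin L × Fin K × Sym2 V → Bool) : Sym2 V → ℕ → Bool :=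
  fun e J =>
    if h : 1 ≤ J ∧ (J - 1) / K < L ∧ (J - 1) % K < K then
      σ (⟨(J - 1) / K, h.2.1⟩, ⟨(J - 1) % K, h.2.2⟩, e)
    else false

/-- `L'(e_t)`: the minimum level `l ∈ {1, …, L}` such that the endpoints of the edge `es t`
lie in different parts of `D_{(l,K)}` (i.e. partition number `lK`) when `es t` is
processed. -/
noncomputable def streamLevel (coin : Sym2 V → ℕ → Bool) (es : ℕ → Sym2 V) (K L t : ℕ) : ℕ :=
  sInf {l | 1 ≤ l ∧ l ≤ L ∧ ∀ u v : V, es t = s(u, v) → ¬ DStream coin es (t + 1) (l * K) u v}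

/-!
The lower bound `s'_e ≤ s_e` is monotonicity of strong connectivity. For the upper bound only
edges with `s_e > ρ log n` matter, and these exist only when `log n ≥ 4`, i.e. when `p ≤ 1`.
Fix such an edge and an `s_e`-connected vertex set `U` containing it. If every cut of `U` keeps
`⌊s_e / (2 log n)⌋` sampled edges, `U` witnesses `s'_e ≥ ⌊s_e / (2 log n)⌋`. A cut of `U` with
`k ≥ s_e` edges fails to do so with probability at most `exp(-3k / (2 log n))` (Chernoff), and by
Karger's cut counting there are at most `(2n)^(2(k / s_e + 1))` such cuts. Summing over `k` and
over the edges gives failure probability at most `n^(-d)`.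
-/

open Finset

section Probability

variable {α : Type*} [Fintype α] {p : α → ℝ}

theorem bernWeight_nonneg (hp : ∀ a, p a ∈ Set.Icc 0 1) (σ : α → Bool) :
    0 ≤ bernWeight p σ :=
  prod_nonneg fun a _ => by
    cases σ a <;> simp [(hp a).1, (hp a).2]

variable [DecidableEq α]

theorem Exp_prod (p : α → ℝ) (g : α → Bool → ℝ) :
    Exp p (fun σ => ∏ a, g a (σ a)) = ∏ a, (p a * g a true + (1 - p a) * g a false) := by
  simp only [Exp, bernWeight, ← prod_mul_distrib]
  rw [← Fintype.prod_sum (fun a b => (if b then p a else 1 - p a) * g a b)]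
  simp

theorem sum_bernWeight (p : α → ℝ) : ∑ σ, bernWeight p σ = 1 := by
  simpa [Exp] using Exp_prod p (fun _ _ => 1)

theorem Pr_empty (p : α → ℝ) : Pr p ∅ = 0 := by
  simp [Pr]

theorem Pr_add_Pr_compl (p : α → ℝ) (A : Set (α → Bool)) : Pr p A + Pr p Aᶜ = 1 := by
  simp [Pr, ← sum_add_distrib, sum_bernWeight]

theorem Pr_mono (hp : ∀ a, p a ∈ Set.Icc 0 1) {A B : Set (α → Bool)} (hAB : A ⊆ B) :
    Pr p A ≤ Pr p B :=
  sum_le_sum fun σ _ => Set.indicator_le_indicator_of_subset hAB (bernWeight_nonneg hp) σ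

theorem Pr_biUnion_le (hp : ∀ a, p a ∈ Set.Icc 0 1) {ι : Type*} (I : Finset ι)
    (B : ι → Set (α → Bool)) : Pr p (⋃ i ∈ I, B i) ≤ ∑ i ∈ I, Pr p (B i) := by
  have hw (i : ι) (σ : α → Bool) : 0 ≤ (B i).indicator (bernWeight p) σ :=
    Set.indicator_nonneg (fun σ _ => bernWeight_nonneg hp σ) σ
  simp only [Pr]
  rw [sum_comm]
  refine sum_le_sum fun σ _ => ?_
  by_cases hσ : σ ∈ ⋃ i ∈ I, B i
  · obtain ⟨i, hi, hσi⟩ := Set.mem_iUnion₂.mp hσ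
    rw [Set.indicator_of_mem hσ, ← Set.indicator_of_mem hσi (bernWeight p)]
    exact single_le_sum (fun j _ => hw j σ) hi
  · rw [Set.indicator_of_notMem hσ]
    exact sum_nonneg fun j _ => hw j σ

theorem Pr_le_Exp (hp : ∀ a, p a ∈ Set.Icc 0 1) {A : Set (α → Bool)}
    {f : (α → Bool) → ℝ} (hf : ∀ σ, 0 ≤ f σ) (hA : ∀ σ ∈ A, 1 ≤ f σ) :
    Pr p A ≤ Exp p f := by
  refine sum_le_sum fun σ _ => ?_
  by_cases hσ : σ ∈ A
  · rw [Set.indicator_of_mem hσ]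
    exact le_mul_of_one_le_right (bernWeight_nonneg hp σ) (hA σ hσ)
  · rw [Set.indicator_of_notMem hσ]
    exact mul_nonneg (bernWeight_nonneg hp σ) (hf σ)

theorem Exp_const_mul (p : α → ℝ) (c : ℝ) (f : (α → Bool) → ℝ) :
    Exp p (fun σ => c * f σ) = c * Exp p f := by
  simp only [Exp, mul_left_comm _ c, ← mul_sum]

theorem Exp_inv_two_pow_card_filter (q : ℝ) (C : Finset α) :
    Exp (fun _ => q) (fun σ => 2⁻¹ ^ #(C.filter (σ · = true))) = (1 - q / 2) ^ #C := by
  let g : α → Bool → ℝ := fun a b => if a ∈ C ∧ b = true then 2⁻¹ else 1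
  have hprod (σ : α → Bool) : ∏ a, g a (σ a) = 2⁻¹ ^ #(C.filter (σ · = true)) := by
    rw [prod_ite, prod_const, prod_const_one, mul_one]
    congr 2
    ext a
    simp
  have hfactor (a : α) :
      q * g a true + (1 - q) * g a false = if a ∈ C then 1 - q / 2 else 1 := by
    by_cases ha : a ∈ C
    · simp [g, ha]; ring
    · simp [g, ha]
  simp only [← hprod]
  rw [Exp_prod]
  simp only [hfactor, prod_ite_mem, univ_inter, prod_const]

/-- Chernoff bound, with the exponential moment taken at `log 2`. -/
theorem Pr_card_filter_lt_le {q : ℝ} (hq : q ∈ Set.Icc 0 1) (C : Finset α) {t : ℝ}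
    (ht : t ≤ q * #C / 8) :
    Pr (fun _ => q) {σ | (#(C.filter (σ · = true)) : ℝ) < t} ≤
      Real.exp (-(3 / 8) * (q * #C)) := by
  have hlog2 : 0 < Real.log 2 := Real.log_pos one_lt_two
  have hlog2_le : Real.log 2 ≤ 1 := by linarith [Real.log_le_sub_one_of_pos two_pos]
  have hmarkov : Pr (fun _ => q) {σ | (#(C.filter (σ · = true)) : ℝ) < t} ≤
      Exp (fun _ => q)
        (fun σ => Real.exp (Real.log 2 * t) * 2⁻¹ ^ #(C.filter (σ · = true))) := by
    refine Pr_le_Exp (fun _ => hq) (fun σ => by positivity) fun σ hσ => ?_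
    have hpow : (2 : ℝ) ^ #(C.filter (σ · = true)) =
        Real.exp (#(C.filter (σ · = true)) * Real.log 2) := by
      rw [Real.exp_nat_mul, Real.exp_log two_pos]
    rw [inv_pow, ← div_eq_mul_inv, one_le_div (by positivity), hpow, Real.exp_le_exp]
    exact le_of_lt (by nlinarith [hσ.out])
  rw [Exp_const_mul, Exp_inv_two_pow_card_filter] at hmarkov
  calc _ ≤ Real.exp (Real.log 2 * t) * (1 - q / 2) ^ #C := hmarkov
    _ ≤ Real.exp (Real.log 2 * t) * Real.exp (-(q / 2)) ^ #C := by
        gcongr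
        · linarith [hq.2]
        · linarith [Real.add_one_le_exp (-(q / 2))]
    _ = Real.exp (Real.log 2 * t - q * #C / 2) := by
        rw [← Real.exp_nat_mul, ← Real.exp_add]; ring_nf
    _ ≤ Real.exp (-(3 / 8) * (q * #C)) := by
        have hqC : 0 ≤ q * #C := mul_nonneg hq.1 (Nat.cast_nonneg _)
        gcongr
        nlinarith

theorem one_sub_le_Pr_of_Pr_compl_le {A : Set (α → Bool)} {x : ℝ} (h : Pr p Aᶜ ≤ x) :
    1 - x ≤ Pr p A := by
  linarith [Pr_add_Pr_compl p A]

end Probability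

section Crosses

variable {W : Type*} {S : Set V} {e : Sym2 V}

theorem crosses_mk_iff {u v : V} : Crosses S s(u, v) ↔ ¬ (u ∈ S ↔ v ∈ S) := by
  constructor
  · rintro ⟨a, b, hab, ha, hb⟩
    rcases Sym2.eq_iff.mp hab with ⟨rfl, rfl⟩ | ⟨rfl, rfl⟩ <;> tauto
  · intro h
    by_cases hu : u ∈ S
    · exact ⟨u, v, rfl, hu, fun hv => h ⟨fun _ => hv, fun _ => hu⟩⟩
    · exact ⟨v, u, Sym2.eq_swap, by tauto, hu⟩

theorem crosses_map_iff (f : V → W) (S : Set W) (e : Sym2 V) :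
    Crosses S (e.map f) ↔ Crosses (f ⁻¹' S) e := by
  induction e using Sym2.ind with
  | _ u v => simp only [Sym2.map_mk, crosses_mk_iff, Set.mem_preimage]

theorem Crosses.not_isDiag (h : Crosses S e) : ¬ e.IsDiag := by
  obtain ⟨u, v, rfl, hu, hv⟩ := h
  exact fun huv => hv (Sym2.mk_isDiag_iff.mp huv ▸ hu)

theorem Crosses.mem_of_singleton {v : V} (h : Crosses {v} e) : v ∈ e := by
  obtain ⟨u, w, rfl, rfl, -⟩ := h
  exact Sym2.mem_mk_left _ _

end Crosses

section StrongConnectivity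

variable {E F : Set (Sym2 V)} {U : Set V} {e : Sym2 V} {k : ℕ}

theorem IsKConnected.mono [Finite V] (hk : IsKConnected U E k) (hEF : E ⊆ F) :
    IsKConnected U F k :=
  fun S hSU hS hSU' => (hk S hSU hS hSU').trans <|
    Set.ncard_le_ncard (fun _ ha => ⟨hEF ha.1, ha.2⟩) (Set.toFinite _)

theorem induced_mono (hEF : E ⊆ F) (U : Set V) : induced E U ⊆ induced F U :=
  fun _ ha => ⟨hEF ha.1, ha.2⟩

/-- A singleton cut is crossed by at most `|V| - 1` edges. -/
theorem IsKConnected.lt_card [Fintype V] (hk : IsKConnected U F k) (hne : ¬ e.IsDiag)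
    (heU : ∀ x ∈ e, x ∈ U) : k < Fintype.card V := by
  induction e using Sym2.ind with
  | _ u v =>
  have huv : u ≠ v := fun h => hne (Sym2.mk_isDiag_iff.mpr h)
  have hu := heU u (Sym2.mem_mk_left u v)
  have hcut : k ≤ cutValue F {u} :=
    hk {u} (Set.singleton_subset_iff.mpr hu) (Set.singleton_nonempty u)
      fun h => huv (h ▸ heU v (Sym2.mem_mk_right u v)).symm
  have hsub : {a | a ∈ F ∧ Crosses {u} a} ⊆ (fun w => s(u, w)) '' {u}ᶜ := by
    rintro a ⟨-, x, w, rfl, rfl, hw⟩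
    exact ⟨w, hw, rfl⟩
  calc k ≤ cutValue F {u} := hcut
    _ ≤ ((fun w => s(u, w)) '' {u}ᶜ).ncard := Set.ncard_le_ncard hsub (Set.toFinite _)
    _ ≤ ({u}ᶜ : Set V).ncard := Set.ncard_image_le (Set.toFinite _)
    _ < Nat.card V := Set.ncard_lt_card (by simp [Set.compl_eq_univ_sdiff])
    _ = Fintype.card V := Nat.card_eq_fintype_card

theorem exists_isStrongComponent [Finite V] (he : e ∈ E) (heU : ∀ x ∈ e, x ∈ U)
    (hk : IsKConnected U (induced E U) k) :
    ∃ U', IsStrongComponent E k U' ∧ e ∈ induced E U' := by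
  obtain ⟨U', hUU', hmax⟩ := Set.Finite.exists_le_maximal
    (s := {W : Set V | U ⊆ W ∧ IsKConnected W (induced E W) k}) (Set.toFinite _)
    ⟨le_rfl, hk⟩
  refine ⟨U', ⟨⟨_, hUU' (heU _ e.out_fst_mem)⟩, hmax.prop.2, fun W hW hWk => ?_⟩,
    he, fun x hx => hUU' (heU x hx)⟩
  exact hmax.eq_of_ge ⟨hUU'.trans hW, hWk⟩ hW

theorem bddAbove_strongConn_set [Fintype V] (hne : ¬ e.IsDiag) :
    BddAbove {k | ∃ U, IsStrongComponent E k U ∧ e ∈ induced E U} :=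
  ⟨Fintype.card V, fun _ ⟨_, hU, he⟩ => (hU.2.1.lt_card hne he.2).le⟩

theorem le_strongConn [Fintype V] (he : e ∈ E) (hne : ¬ e.IsDiag) (heU : ∀ x ∈ e, x ∈ U)
    (hk : IsKConnected U (induced E U) k) : k ≤ strongConn E e :=
  le_csSup (bddAbove_strongConn_set hne) (exists_isStrongComponent he heU hk)

theorem exists_isKConnected_strongConn [Fintype V] (he : e ∈ E) (hne : ¬ e.IsDiag) :
    ∃ U, (∀ x ∈ e, x ∈ U) ∧ IsKConnected U (induced E U) (strongConn E e) := by
  have hzero : IsKConnected (Set.univ : Set V) (induced E Set.univ) 0 :=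
    fun _ _ _ _ => Nat.zero_le _
  obtain ⟨U, hU, heU⟩ := Nat.sSup_mem
    ⟨0, exists_isStrongComponent he (fun _ _ => Set.mem_univ _) hzero⟩
    (bddAbove_strongConn_set hne)
  exact ⟨U, heU.2, hU.2.1⟩

theorem strongConn_mono [Fintype V] (hFE : F ⊆ E) (he : e ∈ F) (hne : ¬ e.IsDiag) :
    strongConn F e ≤ strongConn E e := by
  obtain ⟨U, heU, hU⟩ := exists_isKConnected_strongConn he hne
  exact le_strongConn (hFE he) hne heU (hU.mono (induced_mono hFE U))

theorem strongConn_lt_card [Fintype V] (he : e ∈ E) (hne : ¬ e.IsDiag) :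
    strongConn E e < Fintype.card V := by
  obtain ⟨U, heU, hU⟩ := exists_isKConnected_strongConn he hne
  exact hU.lt_card hne heU

end StrongConnectivity

/-! Multigraphs are modelled as edge families `ends : ι → Sym2 X`, so that contracting an edge
keeps the edge index set: parallel edges and loops are allowed. -/

section CutCounting

open scoped Classical

variable {X Y ι : Type*} [Fintype X] [Fintype ι]

noncomputable def cutSize (ends : ι → Sym2 X) (S : Set X) : ℕ :=
  #{i | Crosses S (ends i)}

def IsEdgeConnected (ends : ι → Sym2 X) (s : ℕ) : Prop :=
  ∀ S : Set X, S.Nonempty → S ≠ Set.univ → s ≤ cutSize ends S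

noncomputable def smallCuts (ends : ι → Sym2 X) (c : ℕ) : Finset (Set X) :=
  {S | S.Nonempty ∧ S ≠ Set.univ ∧ cutSize ends S ≤ c}

omit [Fintype X] in
theorem cutSize_map (f : X → Y) (ends : ι → Sym2 X) (S : Set Y) :
    cutSize (Sym2.map f ∘ ends) S = cutSize ends (f ⁻¹' S) := by
  simp [cutSize, crosses_map_iff]

omit [Fintype X] in
theorem IsEdgeConnected.map [Fintype Y] {ends : ι → Sym2 X} {s : ℕ}
    (h : IsEdgeConnected ends s) {f : X → Y} (hf : f.Surjective) :
    IsEdgeConnected (Sym2.map f ∘ ends) s :=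
  fun S hS hSu => cutSize_map f ends S ▸ h _ (hS.preimage hf)
    (by rwa [Ne, ← Set.preimage_univ, (Set.preimage_injective.mpr hf).eq_iff])

theorem preimage_mem_smallCuts_iff [Fintype Y] {ends : ι → Sym2 X} {c : ℕ} {f : X → Y}
    (hf : f.Surjective) {S : Set Y} :
    f ⁻¹' S ∈ smallCuts ends c ↔ S ∈ smallCuts (Sym2.map f ∘ ends) c := by
  simp only [smallCuts, mem_filter, mem_univ, true_and, cutSize_map, hf.nonempty_preimage]
  rw [← Set.preimage_univ (f := f), (Set.preimage_injective.mpr hf).ne_iff]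

theorem sum_cutSize_singleton_le (ends : ι → Sym2 X) :
    ∑ v, cutSize ends {v} ≤ 2 * #{i | ¬ (ends i).IsDiag} := by
  have hcard (a : Sym2 X) : #{v | Crosses {v} a} ≤ 2 := by
    induction a using Sym2.ind with
    | _ u w =>
      refine (card_le_card fun v hv => ?_).trans (card_le_two (a := u) (b := w))
      simpa using (mem_filter.mp hv).2.mem_of_singleton
  calc ∑ v, cutSize ends {v} = ∑ i, #{v | Crosses {v} (ends i)} := by
        simp only [cutSize, card_filter]; exact sum_comm
    _ = ∑ i with ¬ (ends i).IsDiag, #{v | Crosses {v} (ends i)} := by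
        refine (sum_filter_of_ne fun i _ hi => ?_).symm
        obtain ⟨v, hv⟩ := card_ne_zero.mp hi
        exact (mem_filter.mp hv).2.not_isDiag
    _ ≤ ∑ i with ¬ (ends i).IsDiag, 2 := sum_le_sum fun i _ => hcard _
    _ = 2 * #{i | ¬ (ends i).IsDiag} := by rw [sum_const, smul_eq_mul, mul_comm]

noncomputable def contract {x y : X} (hxy : x ≠ y) (v : X) : {v // v ≠ y} :=
  if h : v = y then ⟨x, hxy⟩ else ⟨v, h⟩

omit [Fintype X] in
theorem contract_surjective {x y : X} (hxy : x ≠ y) : (contract hxy).Surjective :=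
  fun w => ⟨w, dif_neg w.2⟩

omit [Fintype X] in
theorem preimage_contract_preimage_val {x y : X} (hxy : x ≠ y) {S : Set X}
    (hS : x ∈ S ↔ y ∈ S) : contract hxy ⁻¹' (Subtype.val ⁻¹' S) = S := by
  ext v
  by_cases hv : v = y
  · subst hv; simp [contract, hS]
  · simp [contract, hv]

theorem card_smallCuts_not_crosses_le (ends : ι → Sym2 X) (c : ℕ) {x y : X} (hxy : x ≠ y) :
    #{S ∈ smallCuts ends c | ¬ Crosses S s(x, y)} ≤
      #(smallCuts (Sym2.map (contract hxy) ∘ ends) c) := by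
  refine (card_le_card fun S hS => ?_).trans (card_image_le (f := (contract hxy ⁻¹' ·)))
  obtain ⟨hS, hxyS⟩ := mem_filter.mp hS
  have hpre := preimage_contract_preimage_val hxy (not_not.mp (crosses_mk_iff.not.mp hxyS))
  refine mem_image.mpr ⟨_, ?_, hpre⟩
  rw [← preimage_mem_smallCuts_iff (contract_surjective hxy), hpre]
  exact hS

/-- Double counting of pairs (small cut, non-loop edge not crossing it). -/
theorem card_smallCuts_mul_le (ends : ι → Sym2 X) (c G : ℕ)
    (hG : ∀ a : Sym2 X, ¬ a.IsDiag → #{S ∈ smallCuts ends c | ¬ Crosses S a} ≤ G) :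
    #(smallCuts ends c) * #{i | ¬ (ends i).IsDiag} ≤
      #{i | ¬ (ends i).IsDiag} * G + #(smallCuts ends c) * c := by
  set J : Finset ι := {i | ¬ (ends i).IsDiag}
  have hS : ∀ S ∈ smallCuts ends c, #J ≤ #{i ∈ J | ¬ Crosses S (ends i)} + c := by
    intro S hS
    have hcross : #{i ∈ J | Crosses S (ends i)} ≤ c :=
      (card_le_card (filter_subset_filter _ (subset_univ J))).trans (mem_filter.mp hS).2.2.2
    have := card_filter_add_card_filter_not (s := J) (fun i => Crosses S (ends i))
    omega
  calc #(smallCuts ends c) * #J = ∑ _S ∈ smallCuts ends c, #J := by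
        rw [sum_const, smul_eq_mul]
    _ ≤ ∑ S ∈ smallCuts ends c, (#{i ∈ J | ¬ Crosses S (ends i)} + c) := sum_le_sum hS
    _ = ∑ i ∈ J, #{S ∈ smallCuts ends c | ¬ Crosses S (ends i)} +
        #(smallCuts ends c) * c := by
        rw [sum_add_distrib, sum_const, smul_eq_mul]
        congr 1
        exact sum_card_bipartiteAbove_eq_sum_card_bipartiteBelow _
    _ ≤ ∑ _i ∈ J, G + #(smallCuts ends c) * c := by
        gcongr with i hi
        exact hG _ (mem_filter.mp hi).2
    _ = #J * G + #(smallCuts ends c) * c := by rw [sum_const, smul_eq_mul]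

theorem le_two_pow_mul_choose_of_mul_le {N m q s β : ℕ} (hs : 0 < s) (hq : 2 * β < q)
    (hm : q * s ≤ 2 * m)
    (h : N * m ≤ m * (2 ^ (2 * β) * (q - 1).choose (2 * β)) + N * (β * s)) :
    N ≤ 2 ^ (2 * β) * q.choose (2 * β) := by
  have hN : N * q ≤ q * (2 ^ (2 * β) * (q - 1).choose (2 * β)) + N * (2 * β) := by
    set G := 2 ^ (2 * β) * (q - 1).choose (2 * β)
    refine Nat.le_of_mul_le_mul_right ?_ hs
    rcases le_or_gt N G with hNG | hNG
    · nlinarith [Nat.mul_le_mul_right (q * s) hNG, Nat.zero_le (N * (2 * β) * s)]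
    · obtain ⟨r, rfl⟩ := Nat.exists_eq_add_of_lt hNG
      nlinarith
  have hchoose := Nat.choose_mul_succ_eq (q - 1) (2 * β)
  rw [Nat.sub_add_cancel (by omega)] at hchoose
  refine Nat.le_of_mul_le_mul_right ?_ (show 0 < q - 2 * β by omega)
  calc N * (q - 2 * β) = N * q - N * (2 * β) := Nat.mul_sub _ _ _
    _ ≤ q * (2 ^ (2 * β) * (q - 1).choose (2 * β)) := by omega
    _ = 2 ^ (2 * β) * q.choose (2 * β) * (q - 2 * β) := by rw [mul_assoc, ← hchoose]; ring

/-- Karger's contraction argument in counting form: contracting a non-loop edge keeps the cuts it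
does not cross, and a cut of size at most `β * s` is crossed by few of the at least `q * s / 2`
non-loop edges. -/
theorem card_smallCuts_le {s β : ℕ} (hs : 0 < s) (hβ : 0 < β) (ends : ι → Sym2 X)
    (hconn : IsEdgeConnected ends s) :
    #(smallCuts ends (β * s)) ≤
      2 ^ (2 * β) * (max (Fintype.card X) (2 * β)).choose (2 * β) := by
  induction hq : Fintype.card X using Nat.strong_induction_on generalizing X with
  | _ q ih =>
  rcases le_or_gt q (2 * β) with hqβ | hqβ
  · calc #(smallCuts ends (β * s)) ≤ Fintype.card (Set X) := card_le_univ _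
      _ = 2 ^ q := by rw [Fintype.card_set, hq]
      _ ≤ 2 ^ (2 * β) * (max q (2 * β)).choose (2 * β) := by
        rw [max_eq_right hqβ, Nat.choose_self, mul_one]
        exact Nat.pow_le_pow_right two_pos hqβ
  have hcontract (a : Sym2 X) (ha : ¬ a.IsDiag) :
      #{S ∈ smallCuts ends (β * s) | ¬ Crosses S a} ≤
        2 ^ (2 * β) * (q - 1).choose (2 * β) := by
    induction a using Sym2.ind with
    | _ x y =>
    have hxy : x ≠ y := fun h => ha (Sym2.mk_isDiag_iff.mpr h)
    have hcard : Fintype.card {v // v ≠ y} = q - 1 := by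
      simp [Fintype.card_subtype_compl, hq]
    refine (card_smallCuts_not_crosses_le ends _ hxy).trans ?_
    have := ih (q - 1) (by omega) _ (hconn.map (contract_surjective hxy)) hcard
    rwa [max_eq_left (by omega)] at this
  have hdeg : q * s ≤ 2 * #{i | ¬ (ends i).IsDiag} := by
    have hsingleton (v : X) : s ≤ cutSize ends {v} := by
      refine hconn {v} (Set.singleton_nonempty v) fun h => ?_
      obtain ⟨w, hw⟩ := Fintype.exists_ne_of_one_lt_card (show 1 < Fintype.card X by omega) v
      exact hw (h ▸ Set.mem_univ w : w ∈ ({v} : Set X))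
    calc q * s = ∑ _v : X, s := by rw [sum_const, card_univ, hq, smul_eq_mul]
      _ ≤ ∑ v, cutSize ends {v} := sum_le_sum fun v _ => hsingleton v
      _ ≤ _ := sum_cutSize_singleton_le ends
  rw [max_eq_left hqβ.le]
  exact le_two_pow_mul_choose_of_mul_le hs hqβ hdeg (card_smallCuts_mul_le ends _ _ hcontract)

theorem card_smallCuts_le_pow {s β : ℕ} (hs : 0 < s) (hβ : 0 < β)
    (ends : ι → Sym2 X) (hconn : IsEdgeConnected ends s) :
    #(smallCuts ends (β * s)) ≤ (2 * Fintype.card X) ^ (2 * β) := by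
  rcases isEmpty_or_nonempty X with hX | hX
  · have : smallCuts ends (β * s) = ∅ :=
      filter_eq_empty_iff.mpr fun S _ hS => hS.1.elim fun x _ => hX.elim x
    rw [this, card_empty]
    exact Nat.zero_le _
  refine (card_smallCuts_le hs hβ ends hconn).trans ?_
  rw [mul_pow]
  gcongr
  rcases le_total (2 * β) (Fintype.card X) with h | h
  · rw [max_eq_left h]
    exact Nat.choose_le_pow _ _
  · rw [max_eq_right h, Nat.choose_self]
    exact Nat.one_le_pow _ _ Fintype.card_pos

end CutCounting

section CutsOfSubsets

open scoped Classical

variable [Fintype V]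

theorem cutValue_eq_card (W : Set (Sym2 V)) (S : Set V) :
    cutValue W S = #{a : W | Crosses S a} := by
  rw [cutValue, ← Set.ncard_coe_finset, ← Set.ncard_image_of_injective _ Subtype.val_injective]
  congr 1
  ext a
  simp [and_comm]

def restrictEnds {U : Set V} {W : Set (Sym2 V)} (hW : ∀ a ∈ W, ∀ x ∈ a, x ∈ U) :
    W → Sym2 U :=
  fun a => a.1.attachWith (hW a.1 a.2)

theorem cutSize_restrictEnds {U : Set V} {W : Set (Sym2 V)} (hW : ∀ a ∈ W, ∀ x ∈ a, x ∈ U)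
    (S : Set U) : cutSize (restrictEnds hW) S = cutValue W (Subtype.val '' S) := by
  rw [cutValue_eq_card, cutSize]
  congr 1
  ext a
  have ha : a.1 = (restrictEnds hW a).map Subtype.val := (Sym2.attachWith_map_subtypeVal _).symm
  simp only [mem_filter, mem_univ, true_and]
  rw [ha, crosses_map_iff, Set.preimage_image_eq _ Subtype.val_injective]

theorem ncard_cuts_le_pow {U : Set V} {W : Set (Sym2 V)} {s β : ℕ} (hs : 0 < s) (hβ : 0 < β)
    (hW : ∀ a ∈ W, ∀ x ∈ a, x ∈ U) (hconn : IsKConnected U W s) :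
    {S : Set V | S ⊆ U ∧ S.Nonempty ∧ S ≠ U ∧ cutValue W S ≤ β * s}.ncard ≤
      (2 * Fintype.card V) ^ (2 * β) := by
  have himage_ne {S : Set U} (hS : S ≠ Set.univ) : Subtype.val '' S ≠ U := by
    have := (Set.image_injective.mpr (Subtype.val_injective (p := (· ∈ U)))).ne hS
    rwa [Set.image_univ, Subtype.range_coe] at this
  have hconn' : IsEdgeConnected (restrictEnds hW) s := fun S hS hSu => by
    rw [cutSize_restrictEnds]
    exact hconn _ (Subtype.coe_image_subset U S) (hS.image _) (himage_ne hSu)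
  have hsub : {S : Set V | S ⊆ U ∧ S.Nonempty ∧ S ≠ U ∧ cutValue W S ≤ β * s} ⊆
      (Subtype.val '' ·) '' (smallCuts (restrictEnds hW) (β * s) : Set (Set U)) := by
    rintro S ⟨hSU, hS, hSne, hcut⟩
    have hval : Subtype.val '' (Subtype.val ⁻¹' S : Set U) = S := by
      rw [Subtype.image_preimage_coe, Set.inter_eq_right.mpr hSU]
    refine ⟨Subtype.val ⁻¹' S, ?_, hval⟩
    simp only [smallCuts, coe_filter, mem_univ, true_and]
    refine ⟨?_, fun h => hSne ?_, ?_⟩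
    · obtain ⟨x, hx⟩ := hS
      exact ⟨⟨x, hSU hx⟩, hx⟩
    · rw [← hval, h, Set.image_univ, Subtype.range_coe]
    · rwa [cutSize_restrictEnds, hval]
  calc _ ≤ _ := Set.ncard_le_ncard hsub (Set.toFinite _)
    _ ≤ _ := Set.ncard_image_le (Set.toFinite _)
    _ = #(smallCuts (restrictEnds hW) (β * s)) := Set.ncard_coe_finset _
    _ ≤ (2 * Fintype.card U) ^ (2 * β) := card_smallCuts_le_pow hs hβ _ hconn'
    _ ≤ (2 * Fintype.card V) ^ (2 * β) := by gcongr; exact Fintype.card_subtype_le _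

end CutsOfSubsets

section Sampling

open scoped Classical

variable [Fintype V] {E : Set (Sym2 V)} {U : Set V} {e : Sym2 V}

def sampledEdges (E : Set (Sym2 V)) (σ : Sym2 V → Bool) : Set (Sym2 V) :=
  {a | a ∈ E ∧ σ a = true}

noncomputable def cutsOf (U : Set V) : Finset (Set V) :=
  {S | S ⊆ U ∧ S.Nonempty ∧ S ≠ U}

theorem mem_cutsOf {S : Set V} : S ∈ cutsOf U ↔ S ⊆ U ∧ S.Nonempty ∧ S ≠ U := by
  simp [cutsOf]

theorem strongConn_sampledEdges_le (he : e ∈ E) (hne : ¬ e.IsDiag) (σ : Sym2 V → Bool) :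
    strongConn (sampledEdges E σ ∪ {e}) e ≤ strongConn E e :=
  strongConn_mono (Set.union_subset (fun _ ha => ha.1) (Set.singleton_subset_iff.mpr he))
    (Set.mem_union_right _ rfl) hne

theorem le_strongConn_sampledEdges (hne : ¬ e.IsDiag) (heU : ∀ x ∈ e, x ∈ U)
    {σ : Sym2 V → Bool} {t : ℕ}
    (ht : ∀ S ∈ cutsOf U, t ≤ cutValue (induced (sampledEdges E σ) U) S) :
    t ≤ strongConn (sampledEdges E σ ∪ {e}) e := by
  have hconn : IsKConnected U (induced (sampledEdges E σ) U) t :=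
    fun S hSU hS hSU' => ht S (mem_cutsOf.mpr ⟨hSU, hS, hSU'⟩)
  exact le_strongConn (Set.mem_union_right _ rfl) hne heU
    (hconn.mono (induced_mono Set.subset_union_left U))

theorem le_strongConn_sampledEdges_mul_add (hne : ¬ e.IsDiag) (heU : ∀ x ∈ e, x ∈ U)
    {σ : Sym2 V → Bool} {L c : ℝ} (hL : 0 < L) (hc : 2 ≤ c)
    (ht : ∀ S ∈ cutsOf U,
      ⌊(strongConn E e : ℝ) / (2 * L)⌋₊ ≤ cutValue (induced (sampledEdges E σ) U) S) :
    (strongConn E e : ℝ) ≤ 2 * strongConn (sampledEdges E σ ∪ {e}) e * L + c * L := by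
  have ht' : (⌊(strongConn E e : ℝ) / (2 * L)⌋₊ : ℝ) ≤
      strongConn (sampledEdges E σ ∪ {e}) e := by
    exact_mod_cast le_strongConn_sampledEdges hne heU ht
  have hfloor := Nat.lt_floor_add_one ((strongConn E e : ℝ) / (2 * L))
  rw [div_lt_iff₀ (by positivity)] at hfloor
  nlinarith

theorem cutValue_induced_sampledEdges (E : Set (Sym2 V)) (U S : Set V) (σ : Sym2 V → Bool) :
    cutValue (induced (sampledEdges E σ) U) S =
      #(({a | a ∈ induced E U ∧ Crosses S a} : Finset (Sym2 V)).filter (σ · = true)) := by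
  rw [cutValue, ← Set.ncard_coe_finset]
  congr 1
  ext a
  simp only [induced, sampledEdges, coe_filter, Set.mem_ofPred, mem_univ, true_and, mem_filter]
  tauto

theorem Pr_cutValue_sampledEdges_lt_le [DecidableEq V] {S : Set V} {L : ℝ} (hL : 4 ≤ L)
    {t : ℝ} (ht : t ≤ cutValue (induced E U) S / (2 * L)) :
    Pr (fun _ => 4 / L) {σ | (cutValue (induced (sampledEdges E σ) U) S : ℝ) < t} ≤
      Real.exp (-(3 / (2 * L) * cutValue (induced E U) S)) := by
  have hp : 4 / L ∈ Set.Icc (0 : ℝ) 1 := ⟨by positivity, (div_le_one (by linarith)).mpr hL⟩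
  have hC : cutValue (induced E U) S =
      #({a | a ∈ induced E U ∧ Crosses S a} : Finset (Sym2 V)) := by
    rw [cutValue, ← Set.ncard_coe_finset, coe_filter]
    simp
  simp only [cutValue_induced_sampledEdges]
  rw [hC] at ht ⊢
  convert Pr_card_filter_lt_le hp _ ?_ using 3
  · field_simp; ring
  · convert ht using 1; field_simp; ring

theorem sum_exp_neg_cutValue_le {W : Set (Sym2 V)} {s : ℕ} (hs : 0 < s)
    (hW : ∀ a ∈ W, ∀ x ∈ a, x ∈ U) (hconn : IsKConnected U W s) {c B : ℝ}
    (hB : ∀ k : ℕ, s ≤ k →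
      (2 * Fintype.card V : ℝ) ^ (2 * (k / s + 1)) * Real.exp (-(c * k)) ≤ B) :
    ∑ S ∈ cutsOf U, Real.exp (-(c * cutValue W S)) ≤ Fintype.card (Sym2 V) * B := by
  set M := Fintype.card (Sym2 V)
  have hmaps : ∀ S ∈ cutsOf U, cutValue W S ∈ Icc s M := fun S hS => by
    rw [mem_cutsOf] at hS
    refine mem_Icc.mpr ⟨hconn S hS.1 hS.2.1 hS.2.2, ?_⟩
    exact (Set.ncard_le_card _).trans_eq Nat.card_eq_fintype_card
  have hfiber (k : ℕ) (hk : k ∈ Icc s M) :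
      ∑ S ∈ cutsOf U with cutValue W S = k, Real.exp (-(c * cutValue W S)) ≤ B := by
    have hks := (mem_Icc.mp hk).1
    have hcard : #{S ∈ cutsOf U | cutValue W S = k} ≤
        (2 * Fintype.card V) ^ (2 * (k / s + 1)) := by
      rw [← Set.ncard_coe_finset]
      refine (Set.ncard_le_ncard ?_ (Set.toFinite _)).trans
        (ncard_cuts_le_pow hs (Nat.succ_pos _) hW hconn)
      intro S hS
      simp only [cutsOf, coe_filter, mem_filter, mem_univ, true_and] at hS
      refine ⟨hS.1.1, hS.1.2.1, hS.1.2.2, ?_⟩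
      rw [hS.2, add_one_mul]
      exact (Nat.lt_div_mul_add hs).le
    calc _ = #{S ∈ cutsOf U | cutValue W S = k} * Real.exp (-(c * k)) := by
          rw [sum_congr rfl fun S hS => by rw [(mem_filter.mp hS).2], sum_const, nsmul_eq_mul]
      _ ≤ (2 * Fintype.card V : ℝ) ^ (2 * (k / s + 1)) * Real.exp (-(c * k)) := by
          gcongr; exact_mod_cast hcard
      _ ≤ B := hB k hks
  have hB0 : 0 ≤ B := (by positivity : (0 : ℝ) ≤ _).trans (hB s le_rfl)
  calc _ = ∑ k ∈ Icc s M, ∑ S ∈ cutsOf U with cutValue W S = k,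
        Real.exp (-(c * cutValue W S)) := (sum_fiberwise_of_maps_to hmaps _).symm
    _ ≤ ∑ _k ∈ Icc s M, B := sum_le_sum hfiber
    _ ≤ M * B := by
        rw [sum_const, Nat.card_Icc, nsmul_eq_mul]
        gcongr
        exact_mod_cast (by omega : M + 1 - s ≤ M)

end Sampling

theorem two_mul_pow_mul_exp_le {n s k : ℕ} (hn : 2 ≤ n) {d : ℝ} (hd : 0 ≤ d) (hsk : s ≤ k)
    (hs : 16 * (d + 2) * Real.log n * Real.log n < s) :
    (2 * n : ℝ) ^ (2 * (k / s + 1)) * Real.exp (-(3 / (2 * Real.log n) * k)) ≤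
      Real.exp (-((d + 4) * Real.log n)) := by
  set L := Real.log n
  have hn' : (2 : ℝ) ≤ n := by exact_mod_cast hn
  have hL : 0 < L := Real.log_pos (by linarith)
  set β := k / s + 1
  have hβ : (β : ℝ) * s ≤ 2 * k := by
    have : β * s ≤ 2 * k := by rw [add_one_mul]; linarith [Nat.div_mul_le_self k s]
    exact_mod_cast this
  have hpow : (2 * n : ℝ) ^ (2 * β) ≤ Real.exp (4 * β * L) := by
    calc (2 * n : ℝ) ^ (2 * β) ≤ ((n : ℝ) ^ 2) ^ (2 * β) := by gcongr; nlinarith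
      _ = Real.exp (4 * β * L) := by
        have h4β : 4 * (β : ℝ) * L = ((2 * (2 * β) : ℕ) : ℝ) * L := by push_cast; ring
        rw [← pow_mul, h4β, Real.exp_nat_mul, Real.exp_log (by positivity)]
  have hkey : (4 * β + d + 4) * L * L ≤ 3 / 2 * k := by
    have h1 : (β : ℝ) * (16 * (d + 2) * L * L) ≤ β * s :=
      mul_le_mul_of_nonneg_left hs.le (Nat.cast_nonneg _)
    have h2 : 0 ≤ d * β * L * L := by positivity
    have h3 : 0 ≤ d * L * L := by positivity
    have hsk' : (s : ℝ) ≤ k := by exact_mod_cast hsk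
    nlinarith
  calc _ ≤ Real.exp (4 * β * L) * Real.exp (-(3 / (2 * L) * k)) := by gcongr
    _ = Real.exp (-((d + 4) * L) - ((3 / 2 * k - (4 * β + d + 4) * L * L) / L)) := by
        rw [← Real.exp_add]; congr 1; field_simp; ring
    _ ≤ Real.exp (-((d + 4) * L)) := by
        gcongr
        exact sub_le_self _ (div_nonneg (by linarith) hL.le)

theorem le_thirty_two_mul_log_sq {x : ℝ} (hx : 2 ≤ x) (hlog : Real.log x < 4) :
    x ≤ 32 * Real.log x ^ 2 := by
  have hlog2 := Real.log_two_gt_d9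
  rcases le_or_gt x 15 with h | h
  · nlinarith [Real.log_le_log two_pos hx]
  · have h8 : 3 * Real.log 2 ≤ Real.log x := by
      rw [← Real.log_rpow two_pos]; exact Real.log_le_log (by positivity) (by norm_num; linarith)
    have hexp : x < Real.exp 4 := (Real.log_lt_iff_lt_exp (by linarith)).mp hlog
    have he4 : Real.exp 4 < 55 := by
      have h4 : Real.exp 4 = Real.exp 1 ^ 4 := by rw [← Real.exp_nat_mul]; norm_num
      calc Real.exp 4 < 2.7182818286 ^ 4 := h4 ▸ by gcongr; exact Real.exp_one_lt_d9
        _ < 55 := by norm_num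
    nlinarith

theorem card_sym2_le_sq (V : Type*) [Fintype V] :
    Fintype.card (Sym2 V) ≤ Fintype.card V ^ 2 := by
  rw [Sym2.card, Nat.choose_two_right]
  apply Nat.div_le_of_le_mul
  rw [Nat.add_sub_cancel]
  nlinarith [Nat.le_self_pow two_ne_zero (Fintype.card V)]

theorem card_sym2_mul_card_sym2_mul_exp_le (V : Type*) [Fintype V] (hV : 0 < Fintype.card V)
    (d : ℝ) :
    (Fintype.card (Sym2 V) : ℝ) * (Fintype.card (Sym2 V) *
      Real.exp (-((d + 4) * Real.log (Fintype.card V)))) ≤ (Fintype.card V : ℝ) ^ (-d) := by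
  have hn : (0 : ℝ) < Fintype.card V := by exact_mod_cast hV
  have hM : (Fintype.card (Sym2 V) : ℝ) ≤ Real.exp (2 * Real.log (Fintype.card V)) := by
    rw [show (2 : ℝ) = ((2 : ℕ) : ℝ) by norm_num, Real.exp_nat_mul, Real.exp_log hn]
    exact_mod_cast card_sym2_le_sq V
  calc _ ≤ Real.exp (2 * Real.log (Fintype.card V)) * (Real.exp (2 * Real.log (Fintype.card V)) *
        Real.exp (-((d + 4) * Real.log (Fintype.card V)))) := by gcongr
    _ = (Fintype.card V : ℝ) ^ (-d) := by
        rw [Real.rpow_def_of_pos hn, ← Real.exp_add, ← Real.exp_add]; ring_nf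

section MainBound

variable {E : Set (Sym2 V)} {e : Sym2 V} {L : ℝ}

def upperEstimateEvent (E : Set (Sym2 V)) (L c : ℝ) (e : Sym2 V) : Set (Sym2 V → Bool) :=
  {σ | (strongConn E e : ℝ) ≤ 2 * strongConn (sampledEdges E σ ∪ {e}) e * L + c * L}

def strengthEstimateEvent (E : Set (Sym2 V)) (L c : ℝ) : Set (Sym2 V → Bool) :=
  {σ | ∀ e ∈ E, strongConn (sampledEdges E σ ∪ {e}) e ≤ strongConn E e ∧
    σ ∈ upperEstimateEvent E L c e}

theorem upperEstimateEvent_eq_univ {c : ℝ} (hL : 0 ≤ L)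
    (he : (strongConn E e : ℝ) ≤ c * L) :
    upperEstimateEvent E L c e = Set.univ :=
  Set.eq_univ_of_forall fun σ => by
    have : 0 ≤ (strongConn (sampledEdges E σ ∪ {e}) e : ℝ) * L := by positivity
    change (strongConn E e : ℝ) ≤ 2 * strongConn (sampledEdges E σ ∪ {e}) e * L + c * L
    linarith

variable [Fintype V]

theorem strongConn_le_of_log_lt_four (he : e ∈ E) (hne : ¬ e.IsDiag) {d : ℝ} (hd : 0 ≤ d)
    (hlog : Real.log (Fintype.card V) < 4) :
    (strongConn E e : ℝ) ≤
      16 * (d + 2) * Real.log (Fintype.card V) * Real.log (Fintype.card V) := by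
  have hlt := strongConn_lt_card he hne
  have hL2 := mul_nonneg hd (sq_nonneg (Real.log (Fintype.card V)))
  rcases Nat.eq_zero_or_pos (strongConn E e) with h0 | hpos
  · rw [h0, Nat.cast_zero]; nlinarith
  have hn : (2 : ℝ) ≤ Fintype.card V := by exact_mod_cast (by omega : 2 ≤ Fintype.card V)
  have hlt' : (strongConn E e : ℝ) < Fintype.card V := by exact_mod_cast hlt
  nlinarith [le_thirty_two_mul_log_sq hn hlog]

theorem strengthEstimateEvent_eq_univ (hE : ∀ e ∈ E, ¬ e.IsDiag) {d : ℝ} (hd : 0 ≤ d)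
    (hL : L = Real.log (Fintype.card V)) (hlog : L < 4) :
    strengthEstimateEvent E L (16 * (d + 2) * L) = Set.univ := by
  subst hL
  refine Set.eq_univ_of_forall fun σ e he => ⟨strongConn_sampledEdges_le he (hE e he) σ, ?_⟩
  rw [upperEstimateEvent_eq_univ (Real.log_natCast_nonneg _)
    (strongConn_le_of_log_lt_four he (hE e he) hd hlog)]
  trivial

variable [DecidableEq V]

theorem Pr_compl_upperEstimateEvent_le (he : e ∈ E) (hne : ¬ e.IsDiag) {d : ℝ} (hd : 0 ≤ d)
    (hL : L = Real.log (Fintype.card V)) (hlog : 4 ≤ L) :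
    Pr (fun _ => 4 / L) (upperEstimateEvent E L (16 * (d + 2) * L) e)ᶜ ≤
      Fintype.card (Sym2 V) * Real.exp (-((d + 4) * L)) := by
  have hp : ∀ _ : Sym2 V, 4 / L ∈ Set.Icc (0 : ℝ) 1 :=
    fun _ => ⟨by positivity, (div_le_one (by linarith)).mpr hlog⟩
  have hρ : 2 ≤ 16 * (d + 2) * L := by nlinarith
  rcases le_or_gt (strongConn E e : ℝ) (16 * (d + 2) * L * L) with hlight | hheavy
  · rw [upperEstimateEvent_eq_univ (by linarith) hlight, Set.compl_univ, Pr_empty]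
    positivity
  obtain ⟨U, heU, hU⟩ := exists_isKConnected_strongConn he hne
  have hs0 : 0 < strongConn E e := by
    exact_mod_cast (by positivity : (0 : ℝ) ≤ _).trans_lt hheavy
  have hn : 2 ≤ Fintype.card V := by have := strongConn_lt_card he hne; omega
  have hfloor (S : Set V) (hS : S ∈ cutsOf U) :
      (⌊(strongConn E e : ℝ) / (2 * L)⌋₊ : ℝ) ≤ cutValue (induced E U) S / (2 * L) := by
    obtain ⟨hSU, hSne, hSU'⟩ := mem_cutsOf.mp hS
    refine (Nat.floor_le (by positivity)).trans ?_
    gcongr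
    exact_mod_cast hU S hSU hSne hSU'
  calc _ ≤ Pr (fun _ => 4 / L) (⋃ S ∈ cutsOf U, {σ |
        (cutValue (induced (sampledEdges E σ) U) S : ℝ) <
          ⌊(strongConn E e : ℝ) / (2 * L)⌋₊}) := Pr_mono hp fun σ hσ => by
          by_contra hnot
          refine hσ (le_strongConn_sampledEdges_mul_add hne heU (by linarith) hρ fun S hS => ?_)
          by_contra h
          exact hnot (Set.mem_biUnion hS (by exact_mod_cast not_le.mp h))
    _ ≤ _ := Pr_biUnion_le hp _ _
    _ ≤ ∑ S ∈ cutsOf U, Real.exp (-(3 / (2 * L) * cutValue (induced E U) S)) :=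
        sum_le_sum fun S hS => Pr_cutValue_sampledEdges_lt_le hlog (hfloor S hS)
    _ ≤ _ := by
        subst hL
        exact sum_exp_neg_cutValue_le hs0 (fun a ha => ha.2) hU
          fun k hk => two_mul_pow_mul_exp_le hn hd hk hheavy

theorem Pr_compl_strengthEstimateEvent_le (hE : ∀ e ∈ E, ¬ e.IsDiag) {d : ℝ} (hd : 0 ≤ d)
    (hL : L = Real.log (Fintype.card V)) (hlog : 4 ≤ L) :
    Pr (fun _ => 4 / L) (strengthEstimateEvent E L (16 * (d + 2) * L))ᶜ ≤
      (Fintype.card V : ℝ) ^ (-d) := by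
  classical
  have hp : ∀ _ : Sym2 V, 4 / L ∈ Set.Icc (0 : ℝ) 1 :=
    fun _ => ⟨by positivity, (div_le_one (by linarith)).mpr hlog⟩
  have hcompl : (strengthEstimateEvent E L (16 * (d + 2) * L))ᶜ ⊆
      ⋃ e ∈ E.toFinset, (upperEstimateEvent E L (16 * (d + 2) * L) e)ᶜ := fun σ hσ => by
    obtain ⟨e, he, hσe⟩ := not_forall₂.mp hσ
    exact Set.mem_biUnion (Set.mem_toFinset.mpr he)
      fun h => hσe ⟨strongConn_sampledEdges_le he (hE e he) σ, h⟩
  calc _ ≤ _ := (Pr_mono hp hcompl).trans (Pr_biUnion_le hp _ _)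
    _ ≤ ∑ _e ∈ E.toFinset, Fintype.card (Sym2 V) * Real.exp (-((d + 4) * L)) :=
        sum_le_sum fun e he => Pr_compl_upperEstimateEvent_le (Set.mem_toFinset.mp he)
          (hE e (Set.mem_toFinset.mp he)) hd hL hlog
    _ ≤ Fintype.card (Sym2 V) * (Fintype.card (Sym2 V) * Real.exp (-((d + 4) * L))) := by
        rw [sum_const, nsmul_eq_mul]
        gcongr
        exact_mod_cast card_le_univ _
    _ ≤ (Fintype.card V : ℝ) ^ (-d) := by
        subst hL
        exact card_sym2_mul_card_sym2_mul_exp_le V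
          (Nat.pos_of_ne_zero fun h => by norm_num [h] at hlog) d

end MainBound

/-- Let `G' = (V, E')` be the random subgraph of `G = (V, E)` obtained by
including each edge independently with probability `p = 4/log n`, and for each `e ∈ E` let
`s'_e` denote the strong connectivity of `e` in the graph `(V, E' ∪ {e})`. Then, with
probability at least `1 - n^{-d}`, every edge `e ∈ E` satisfies
`s'_e ≤ s_e ≤ 2 s'_e log n + ρ log n`, where `ρ = 16(d+2) ln n`. -/
theorem strength_estimation_first_pass {V : Type} [Fintype V] [DecidableEq V]
    (E : Set (Sym2 V)) (hE : ∀ e ∈ E, ¬ e.IsDiag) (d : ℝ) (hd : 0 < d) :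
    let n : ℕ := Fintype.card V
    let ρ : ℝ := 16 * (d + 2) * Real.log n
    1 - (n : ℝ) ^ (-d) ≤
      Pr (fun _ : Sym2 V => 4 / Real.log n)
        {σ | ∀ e ∈ E,
          strongConn ({e' | e' ∈ E ∧ σ e' = true} ∪ {e}) e ≤ strongConn E e ∧
          (strongConn E e : ℝ) ≤
            2 * (strongConn ({e' | e' ∈ E ∧ σ e' = true} ∪ {e}) e : ℝ) * Real.log n +
              ρ * Real.log n} := by
  intro n ρ
  change 1 - (n : ℝ) ^ (-d) ≤ Pr _ (strengthEstimateEvent E (Real.log n) ρ)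
  refine one_sub_le_Pr_of_Pr_compl_le ?_
  rcases le_or_gt 4 (Real.log n) with hlog | hlog
  · exact Pr_compl_strengthEstimateEvent_le hE hd.le rfl hlog
  · rw [strengthEstimateEvent_eq_univ hE hd.le rfl hlog, Set.compl_univ, Pr_empty]
    positivity

end GraphSparsification
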